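/- For every k ≥ 1 and all integers i, j ≥ 1, the element ζ(c_i, c_j) lies in L_k. (The key claim established in the proof of Lemma 3.3(iii) of the paper.) -/

import Mathlib

namespace Paper

variable {G : Type*} [Group G]

/-- The paper's commutator `[a,b] = a⁻¹ b⁻¹ a b`. -/
def pc {G : Type*} [Group G] (a b : G) : G := a⁻¹ * b⁻¹ * a * b

/-- The left-normed iterated commutator `[a, x, (r)…, x]`. -/
def itc {G : Type*} [Group G] (x a : G) : ℕ → G
  | 0 => a
  | r + 1 => pc (itc x a r) x

/-- `c_i`, where `c_1 = y` and `c_{i+1} = [c_i, x]`; equivalently `c_i = [y, x, (i-1)…, x]`. -/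
def cc (x y : G) (i : ℕ) : G := itc x y (i - 1)

/-- `z_{m,n} = [c_m, c_n]`. -/
def zz (x y : G) (m n : ℕ) : G := pc (cc x y m) (cc x y n)

/-- `H = ⟨c_i : i ≥ 1⟩`. -/
def Hsub (x y : G) : Subgroup G :=
  Subgroup.closure {g | ∃ i, 1 ≤ i ∧ g = cc x y i}

/-- `Z = ⟨c_l², z_{m,n} : l, m, n ≥ 1⟩`. -/
def Zsub (x y : G) : Subgroup G :=
  Subgroup.closure ({g | ∃ l, 1 ≤ l ∧ g = cc x y l ^ 2} ∪
    {g | ∃ m n, 1 ≤ m ∧ 1 ≤ n ∧ g = zz x y m n})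

/-- `w_{i,j,k} = ∏_{t=1}^{2^k−1} [z_{i+t,j+t−1}, x, (2^k−1−t)…, x]`,
factors in order of increasing `t` (reindexed by `t ↦ t+1`). -/
def ww (x y : G) (i j k : ℕ) : G :=
  ((List.range (2 ^ k - 1)).map
    (fun t => itc x (zz x y (i + t + 1) (j + t)) (2 ^ k - 2 - t))).prod

/-- `L_k`, the normal closure of `{w_{i,j,k} : i,j ≥ 1} ∪ {z_{m,n} : m ≥ 2^k, n ≥ 1}`. -/
def Lsub (x y : G) (k : ℕ) : Subgroup G :=
  Subgroup.normalClosure ({g | ∃ i j, 1 ≤ i ∧ 1 ≤ j ∧ g = ww x y i j k} ∪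
    {g | ∃ m n, 2 ^ k ≤ m ∧ 1 ≤ n ∧ g = zz x y m n})

/-- `Q_k = ⟨c_l² : l ≥ 2^{k−1}⟩`. -/
def Qsub (x y : G) (k : ℕ) : Subgroup G :=
  Subgroup.closure {g | ∃ l, 2 ^ (k - 1) ≤ l ∧ g = cc x y l ^ 2}

/-- `d_k(h) = [h,x,(2^k−1)…,x]⁻¹ · x^{−2^k} · (xh)^{2^k}`. -/
def dd (x y : G) (k : ℕ) (h : G) : G :=
  (itc x h (2 ^ k - 1))⁻¹ * (x ^ 2 ^ k)⁻¹ * (x * h) ^ 2 ^ k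

/-- `Γ^{2^k} = ⟨g^{2^k} : g ∈ Γ⟩`. -/
def pow2Sub (G : Type*) [Group G] (k : ℕ) : Subgroup G :=
  Subgroup.closure {g | ∃ a : G, g = a ^ 2 ^ k}

/-- `ζ(h₁,h₂) = ∏_{ℓ=0}^{2^k−2} [h₁^x, x, (ℓ)…, x, h₂, x, (2^k−2−ℓ)…, x]`,
factors in order of increasing `ℓ`. -/
def zeta (x : G) (k : ℕ) (h₁ h₂ : G) : G :=
  ((List.range (2 ^ k - 1)).map
    (fun l => itc x (pc (itc x (x⁻¹ * h₁ * x) l) h₂) (2 ^ k - 2 - l))).prod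

/-!
By (b), `Z` is an elementary abelian 2-group, and by (a) the commutator calculus gives
`[z_{m,n}, x] = z_{m,n+1} z_{m+1,n+1} z_{m+1,n}`. Hence `u^a v^b ↦ z_{a+1,b+1}` extends to an
additive map from `𝔽₂[u,v]` to `Z` under which multiplication by `s = u + v + uv` becomes
`z ↦ [z, x]`. Both `ζ(c_i, c_j)` and `w_{i,j,k}` are images of geometric sums in `s`, and for
`n = 2^k - 1` the Frobenius identity `s^{2^k} = u^{2^k} + v^{2^k} + (uv)^{2^k}` rewrites the
polynomial of `ζ` as a sum of polynomials of `w`'s, of monomials `u^a v^b` with `a ≥ 2^k - 1`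
(images `z_{m,n}` with `m ≥ 2^k`), and of a symmetric part whose image is trivial.
-/

open MvPolynomial Finset

section Commutator

theorem pc_one_left (a : G) : pc 1 a = 1 := by simp [pc]

theorem pc_self (a : G) : pc a a = 1 := by simp [pc]

theorem pc_inv (a b : G) : (pc a b)⁻¹ = pc b a := by unfold pc; group

theorem conj_pc (g a b : G) : g⁻¹ * pc a b * g = pc (g⁻¹ * a * g) (g⁻¹ * b * g) := by
  unfold pc; group

theorem pc_mul_left {a b c : G} (h : Commute (pc a c) b) :
    pc (a * b) c = pc a c * pc b c := by
  calc pc (a * b) c = b⁻¹ * (pc a c * b) * pc b c := by unfold pc; group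
    _ = pc a c * pc b c := by rw [h.eq]; group

theorem pc_mul_right {a c d : G} (h : Commute (pc a c) d) :
    pc a (c * d) = pc a d * pc a c := by
  calc pc a (c * d) = pc a d * (d⁻¹ * (pc a c * d)) := by unfold pc; group
    _ = pc a d * pc a c := by rw [h.eq]; group

theorem itc_conj (x a : G) (r : ℕ) : itc x (x⁻¹ * a * x) r = x⁻¹ * itc x a r * x := by
  induction r with
  | zero => rfl
  | succ r ih => rw [itc, ih, itc]; unfold pc; group

theorem commute_of_sq_eq_one {a b : G} (ha : a ^ 2 = 1) (hb : b ^ 2 = 1)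
    (hab : (a * b) ^ 2 = 1) : Commute a b := by
  rw [sq] at ha hb hab
  calc a * b = a * (a * b * (a * b)) * b := by rw [hab]; group
    _ = (a * a) * (b * a) * (b * b) := by group
    _ = b * a := by rw [ha, hb]; group

end Commutator

section Sequence

variable (x y : G)

theorem cc_succ_succ (i : ℕ) : cc x y (i + 1 + 1) = pc (cc x y (i + 1)) x := rfl

theorem itc_cc (i r : ℕ) : itc x (cc x y (i + 1)) r = cc x y (i + 1 + r) := by
  induction r with
  | zero => rfl
  | succ r ih =>
    rw [itc, ih, show i + 1 + (r + 1) = i + r + 1 + 1 by omega, cc_succ_succ,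
      show i + 1 + r = i + r + 1 by omega]

theorem conj_cc (i : ℕ) : x⁻¹ * cc x y (i + 1) * x = cc x y (i + 1) * cc x y (i + 1 + 1) := by
  rw [cc_succ_succ]; unfold pc; group

theorem cc_mem_Hsub (i : ℕ) : cc x y (i + 1) ∈ Hsub x y :=
  Subgroup.subset_closure ⟨i + 1, by omega, rfl⟩

theorem zz_mem_Zsub (m n : ℕ) : zz x y (m + 1) (n + 1) ∈ Zsub x y :=
  Subgroup.subset_closure (Or.inr ⟨m + 1, n + 1, by omega, by omega, rfl⟩)

end Sequence

section Relations

variable {x y : G} (hca : ∀ z ∈ Zsub x y, ∀ h ∈ Hsub x y, z * h = h * z)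
include hca

theorem commute_zz_cc (m n i : ℕ) : Commute (zz x y (m + 1) (n + 1)) (cc x y (i + 1)) :=
  hca _ (zz_mem_Zsub x y m n) _ (cc_mem_Hsub x y i)

theorem pc_cc_mul_cc (m n : ℕ) :
    pc (cc x y (m + 1)) (cc x y (n + 1) * cc x y (n + 1 + 1)) =
      zz x y (m + 1) (n + 1 + 1) * zz x y (m + 1) (n + 1) :=
  pc_mul_right (commute_zz_cc hca m n (n + 1))

theorem conj_zz (m n : ℕ) :
    x⁻¹ * zz x y (m + 1) (n + 1) * x =
      zz x y (m + 1) (n + 1 + 1) * zz x y (m + 1) (n + 1) *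
        (zz x y (m + 1 + 1) (n + 1 + 1) * zz x y (m + 1 + 1) (n + 1)) := by
  have hcomm : Commute (pc (cc x y (m + 1)) (cc x y (n + 1) * cc x y (n + 1 + 1)))
      (cc x y (m + 1 + 1)) := by
    rw [pc_cc_mul_cc hca]
    exact (commute_zz_cc hca m (n + 1) (m + 1)).mul_left (commute_zz_cc hca m n (m + 1))
  rw [zz, conj_pc, conj_cc, conj_cc, pc_mul_left hcomm, pc_cc_mul_cc hca, pc_cc_mul_cc hca]
  rfl

theorem pc_itc_conj_cc (i j l : ℕ) :
    pc (itc x (x⁻¹ * cc x y (i + 1) * x) l) (cc x y (j + 1)) =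
      zz x y (i + l + 1) (j + 1) * zz x y (i + l + 1 + 1) (j + 1) := by
  rw [itc_conj, itc_cc, add_right_comm, conj_cc, pc_mul_left]
  · rfl
  · exact commute_zz_cc hca (i + l) j (i + l + 1)

end Relations

section ElementaryAbelian

variable {x y : G} (hz2 : ∀ z ∈ Zsub x y, z ^ 2 = 1)
include hz2

theorem inv_eq_self_of_mem_Zsub {z : G} (hz : z ∈ Zsub x y) : z⁻¹ = z :=
  inv_eq_of_mul_eq_one_right (by rw [← sq, hz2 z hz])

theorem commute_of_mem_Zsub {z w : G} (hz : z ∈ Zsub x y) (hw : w ∈ Zsub x y) : Commute z w :=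
  commute_of_sq_eq_one (hz2 z hz) (hz2 w hw) (hz2 _ (mul_mem hz hw))

theorem pc_zz (hca : ∀ z ∈ Zsub x y, ∀ h ∈ Hsub x y, z * h = h * z) (m n : ℕ) :
    pc (zz x y (m + 1) (n + 1)) x =
      zz x y (m + 1) (n + 1 + 1) * zz x y (m + 1 + 1) (n + 1 + 1) *
        zz x y (m + 1 + 1) (n + 1) := by
  have hz := zz_mem_Zsub x y m n
  have hcomm := commute_of_mem_Zsub hz2 (zz_mem_Zsub x y m (n + 1)) hz
  calc pc (zz x y (m + 1) (n + 1)) x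
      = (zz x y (m + 1) (n + 1))⁻¹ * (x⁻¹ * zz x y (m + 1) (n + 1) * x) := by unfold pc; group
    _ = zz x y (m + 1) (n + 1) * zz x y (m + 1) (n + 1) * zz x y (m + 1) (n + 1 + 1) *
          (zz x y (m + 1 + 1) (n + 1 + 1) * zz x y (m + 1 + 1) (n + 1)) := by
      rw [conj_zz hca, inv_eq_self_of_mem_Zsub hz2 hz, hcomm.eq]; group
    _ = _ := by rw [← sq, hz2 _ hz]; group

abbrev Zsub.commGroup : CommGroup (Zsub x y) where
  mul_comm a b := Subtype.ext (commute_of_mem_Zsub hz2 a.2 b.2).eq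

/-- `u^a v^b ↦ z_{a+1,b+1}` (with `u = X 0`, `v = X 1`), extended linearly: by (b), `Z` is an
`𝔽₂`-vector space. -/
noncomputable def zOfPoly (p : MvPolynomial (Fin 2) (ZMod 2)) : G :=
  letI := Zsub.commGroup hz2
  letI : Module (ZMod 2) (Additive (Zsub x y)) :=
    AddCommGroup.zmodModule fun z => Subtype.ext (hz2 _ (Additive.toMul z).2)
  ((basisMonomials (Fin 2) (ZMod 2)).constr (ZMod 2)
    (fun d => Additive.ofMul (⟨zz x y (d 0 + 1) (d 1 + 1), zz_mem_Zsub x y _ _⟩ : Zsub x y))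
    p).toMul

theorem zOfPoly_mem (p : MvPolynomial (Fin 2) (ZMod 2)) : zOfPoly hz2 p ∈ Zsub x y :=
  Subtype.prop _

theorem zOfPoly_add (p q : MvPolynomial (Fin 2) (ZMod 2)) :
    zOfPoly hz2 (p + q) = zOfPoly hz2 p * zOfPoly hz2 q := by
  unfold zOfPoly
  rw [map_add]
  rfl

theorem zOfPoly_zero : zOfPoly hz2 (0 : MvPolynomial (Fin 2) (ZMod 2)) = 1 :=
  left_eq_mul.mp (by rw [← zOfPoly_add hz2 0 0, add_zero])

theorem zOfPoly_X_pow_mul_X_pow (a b : ℕ) :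
    zOfPoly hz2 (X 0 ^ a * X 1 ^ b) = zz x y (a + 1) (b + 1) := by
  have h : (X 0 ^ a * X 1 ^ b : MvPolynomial (Fin 2) (ZMod 2)) =
      basisMonomials (Fin 2) (ZMod 2) (Finsupp.single 0 a + Finsupp.single 1 b) := by
    rw [coe_basisMonomials, X_pow_eq_monomial, X_pow_eq_monomial, monomial_mul, one_mul]
  let := Zsub.commGroup hz2
  let : Module (ZMod 2) (Additive (Zsub x y)) :=
    AddCommGroup.zmodModule fun z => Subtype.ext (hz2 _ (Additive.toMul z).2)
  unfold zOfPoly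
  rw [h, Module.Basis.constr_basis]
  simp

end ElementaryAbelian

theorem MvPolynomial.induction_on_X_pow_mul_X_pow {P : MvPolynomial (Fin 2) (ZMod 2) → Prop}
    (p : MvPolynomial (Fin 2) (ZMod 2)) (zero : P 0) (mono : ∀ a b : ℕ, P (X 0 ^ a * X 1 ^ b))
    (add : ∀ p q, P p → P q → P (p + q)) : P p := by
  induction p using MvPolynomial.induction_on' with
  | monomial d c =>
    obtain rfl | rfl := (by decide : ∀ c : ZMod 2, c = 0 ∨ c = 1) c
    · rw [monomial_zero]; exact zero
    · have hd : d = Finsupp.single 0 (d 0) + Finsupp.single 1 (d 1) := by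
        ext i; fin_cases i <;> simp
      rw [hd, ← one_mul (1 : ZMod 2), ← monomial_mul, ← X_pow_eq_monomial,
        ← X_pow_eq_monomial]
      exact mono _ _
  | add p q hp hq => exact add p q hp hq

section PolynomialModel

variable {x y : G} (hz2 : ∀ z ∈ Zsub x y, z ^ 2 = 1)
include hz2

theorem zOfPoly_rename_swap (p : MvPolynomial (Fin 2) (ZMod 2)) :
    zOfPoly hz2 (rename (Equiv.swap 0 1) p) = zOfPoly hz2 p := by
  induction p using MvPolynomial.induction_on_X_pow_mul_X_pow with
  | zero => rw [map_zero]
  | mono a b =>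
    rw [map_mul, map_pow, map_pow, rename_X, rename_X, Equiv.swap_apply_left,
      Equiv.swap_apply_right, mul_comm, zOfPoly_X_pow_mul_X_pow, zOfPoly_X_pow_mul_X_pow, zz,
      ← pc_inv, ← zz, inv_eq_self_of_mem_Zsub hz2 (zz_mem_Zsub x y a b)]
  | add p q hp hq => rw [map_add, zOfPoly_add, zOfPoly_add, hp, hq]

theorem zOfPoly_sum_range (f : ℕ → MvPolynomial (Fin 2) (ZMod 2)) (n : ℕ) :
    zOfPoly hz2 (∑ t ∈ range n, f t) =
      ((List.range n).map fun t => zOfPoly hz2 (f t)).prod := by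
  induction n with
  | zero => rw [sum_range_zero, zOfPoly_zero]; rfl
  | succ n ih => rw [sum_range_succ, zOfPoly_add, ih, List.range_succ]; simp

variable (hca : ∀ z ∈ Zsub x y, ∀ h ∈ Hsub x y, z * h = h * z)
include hca

theorem zOfPoly_mul_eq_pc (p : MvPolynomial (Fin 2) (ZMod 2)) :
    zOfPoly hz2 ((X 0 + X 1 + X 0 * X 1) * p) = pc (zOfPoly hz2 p) x := by
  induction p using MvPolynomial.induction_on_X_pow_mul_X_pow with
  | zero => rw [mul_zero, zOfPoly_zero, pc_one_left]
  | mono a b =>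
    rw [show (X 0 + X 1 + X 0 * X 1) * (X 0 ^ a * X 1 ^ b) =
        X 0 ^ a * X 1 ^ (b + 1) + X 0 ^ (a + 1) * X 1 ^ (b + 1) +
          (X 0 ^ (a + 1) * X 1 ^ b : MvPolynomial (Fin 2) (ZMod 2)) by ring,
      zOfPoly_add, zOfPoly_add, zOfPoly_X_pow_mul_X_pow, zOfPoly_X_pow_mul_X_pow,
      zOfPoly_X_pow_mul_X_pow, zOfPoly_X_pow_mul_X_pow, pc_zz hz2 hca]
  | add p q hp hq =>
    have hcomm : Commute (pc (zOfPoly hz2 p) x) (zOfPoly hz2 q) :=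
      hp ▸ commute_of_mem_Zsub hz2 (zOfPoly_mem hz2 _) (zOfPoly_mem hz2 _)
    rw [mul_add, zOfPoly_add, zOfPoly_add, hp, hq, pc_mul_left hcomm]

theorem zOfPoly_pow_mul_eq_itc (r : ℕ) (p : MvPolynomial (Fin 2) (ZMod 2)) :
    zOfPoly hz2 ((X 0 + X 1 + X 0 * X 1) ^ r * p) = itc x (zOfPoly hz2 p) r := by
  induction r with
  | zero => rw [pow_zero, one_mul]; rfl
  | succ r ih => rw [pow_succ', mul_assoc, zOfPoly_mul_eq_pc hz2 hca, ih]; rfl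

theorem zeta_eq_zOfPoly (k i j : ℕ) :
    zeta x k (cc x y (i + 1)) (cc x y (j + 1)) =
      zOfPoly hz2 (X 0 ^ i * X 1 ^ j * ((1 + X 0) *
        ∑ l ∈ range (2 ^ k - 1), X 0 ^ l * (X 0 + X 1 + X 0 * X 1) ^ (2 ^ k - 1 - 1 - l))) := by
  rw [mul_sum, mul_sum, zOfPoly_sum_range, zeta]
  refine congrArg List.prod (List.map_congr_left fun l _ => ?_)
  rw [pc_itc_conj_cc hca, show X 0 ^ i * X 1 ^ j * ((1 + X 0) *
      (X 0 ^ l * (X 0 + X 1 + X 0 * X 1) ^ (2 ^ k - 1 - 1 - l))) =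
      (X 0 + X 1 + X 0 * X 1) ^ (2 ^ k - 2 - l) *
        (X 0 ^ (i + l) * X 1 ^ j + X 0 ^ (i + l + 1) * X 1 ^ j :
          MvPolynomial (Fin 2) (ZMod 2)) by rw [Nat.sub_sub (2 ^ k) 1 1]; ring,
    zOfPoly_pow_mul_eq_itc hz2 hca, zOfPoly_add, zOfPoly_X_pow_mul_X_pow, zOfPoly_X_pow_mul_X_pow]

theorem ww_eq_zOfPoly (k i j : ℕ) :
    ww x y (i + 1) (j + 1) k =
      zOfPoly hz2 (X 0 ^ (i + 1) * X 1 ^ j * ∑ t ∈ range (2 ^ k - 1),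
        (X 0 * X 1) ^ t * (X 0 + X 1 + X 0 * X 1) ^ (2 ^ k - 1 - 1 - t)) := by
  rw [mul_sum, zOfPoly_sum_range, ww]
  refine congrArg List.prod (List.map_congr_left fun t _ => ?_)
  rw [show X 0 ^ (i + 1) * X 1 ^ j *
      ((X 0 * X 1) ^ t * (X 0 + X 1 + X 0 * X 1) ^ (2 ^ k - 1 - 1 - t)) =
      (X 0 + X 1 + X 0 * X 1) ^ (2 ^ k - 2 - t) * (X 0 ^ (i + 1 + t) * X 1 ^ (j + t) :
          MvPolynomial (Fin 2) (ZMod 2)) by rw [Nat.sub_sub (2 ^ k) 1 1]; ring,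
    zOfPoly_pow_mul_eq_itc hz2 hca, zOfPoly_X_pow_mul_X_pow, add_right_comm i 1 t,
    add_right_comm j t 1]

end PolynomialModel

theorem geom_sum₂_add {R : Type*} [CommSemiring R] (u v : R) (m r : ℕ) :
    ∑ i ∈ range (m + r), u ^ i * v ^ (m + r - 1 - i) =
      v ^ r * ∑ i ∈ range m, u ^ i * v ^ (m - 1 - i) +
        u ^ m * ∑ i ∈ range r, u ^ i * v ^ (r - 1 - i) := by
  rw [sum_range_add, mul_sum, mul_sum]
  congr 1
  · refine sum_congr rfl fun i hi => ?_
    rw [show m + r - 1 - i = (m - 1 - i) + r by have := mem_range.mp hi; omega]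
    ring
  · refine sum_congr rfl fun i hi => ?_
    rw [show m + r - 1 - (m + i) = r - 1 - i by omega]
    ring

section CharTwo

variable {R : Type*} [CommRing R] [CharP R 2]

theorem mul_one_add_mul_geom_sum₂ (u v : R) (n : ℕ) :
    v * (1 + u) * ∑ i ∈ range n, u ^ i * (u + v + u * v) ^ (n - 1 - i) =
      (u + v) * ∑ i ∈ range n, (u * v) ^ i * (u + v + u * v) ^ (n - 1 - i) +
        u ^ n + (u * v) ^ n := by
  linear_combination (-1 : R) * geom_sum₂_mul u (u + v + u * v) n +
    geom_sum₂_mul (u * v) (u + v + u * v) n - u ^ n * CharTwo.two_eq_zero (R := R)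

theorem one_add_mul_geom_sum₂_of_add_one_eq_two_pow [IsDomain R] {u v : R} (hv : v ≠ 0)
    (huv : u + v ≠ 0) {n k : ℕ} (hn : n + 1 = 2 ^ k) :
    (1 + u) * ∑ i ∈ range n, u ^ i * (u + v + u * v) ^ (n - 1 - i) =
      u * ∑ i ∈ range n, (u * v) ^ i * (u + v + u * v) ^ (n - 1 - i) +
        ∑ i ∈ range n, u ^ i * v ^ (n - 1 - i) := by
  have hfrob : (u + v + u * v) ^ (n + 1) = u ^ (n + 1) + v ^ (n + 1) + (u * v) ^ (n + 1) := by
    rw [hn, add_pow_char_pow, add_pow_char_pow]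
  -- after multiplying by `v (u + v)` every geometric sum telescopes
  apply mul_left_cancel₀ (mul_ne_zero hv huv)
  linear_combination (u + v) * mul_one_add_mul_geom_sum₂ u v n + v * geom_sum₂_mul u v n +
    (u * v - u - v) * geom_sum₂_mul (u * v) (u + v + u * v) n - hfrob +
    (v * u ^ n - v * v ^ n - u * v * ∑ i ∈ range n, u ^ i * v ^ (n - 1 - i) +
      (u + v) * (u + v + u * v) ^ n) * CharTwo.two_eq_zero (R := R)

end CharTwo

section Membership

variable {x y : G} (hz2 : ∀ z ∈ Zsub x y, z ^ 2 = 1) (k : ℕ)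
include hz2

theorem zOfPoly_X_pow_mul_mem_Lsub {a : ℕ} (ha : 2 ^ k - 1 ≤ a)
    (p : MvPolynomial (Fin 2) (ZMod 2)) : zOfPoly hz2 (X 0 ^ a * p) ∈ Lsub x y k := by
  induction p using MvPolynomial.induction_on_X_pow_mul_X_pow with
  | zero => rw [mul_zero, zOfPoly_zero]; exact one_mem _
  | mono c d =>
    rw [← mul_assoc, ← pow_add, zOfPoly_X_pow_mul_X_pow]
    exact Subgroup.subset_normalClosure (Or.inr ⟨_, _, by omega, by omega, rfl⟩)
  | add p q hp hq => rw [mul_add, zOfPoly_add]; exact mul_mem hp hq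

theorem zOfPoly_X_mul_X_pow_mul_geom_sum₂ (m a : ℕ) :
    zOfPoly hz2 ((X 0 * X 1) ^ a * ∑ i ∈ range m, X 0 ^ i * X 1 ^ (m - 1 - i)) = 1 := by
  induction m using Nat.twoStepInduction generalizing a with
  | zero => rw [sum_range_zero, mul_zero, zOfPoly_zero]
  | one => rw [sum_range_one, pow_zero, one_mul, Nat.sub_self, pow_zero, mul_one, mul_pow,
      zOfPoly_X_pow_mul_X_pow, zz, pc_self]
  | more m ih _ =>
    have hsum : ∑ i ∈ range (m + 2), X 0 ^ i * X 1 ^ (m + 2 - 1 - i) =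
        X 0 * X 1 * ∑ i ∈ range m, X 0 ^ i * X 1 ^ (m - 1 - i) + X 0 ^ (m + 1) +
          (X 1 ^ (m + 1) : MvPolynomial (Fin 2) (ZMod 2)) := by
      rw [sum_range_succ', sum_range_succ, mul_sum, show m + 2 - 1 - (m + 1) = 0 by omega,
        show m + 2 - 1 - 0 = m + 1 by omega, pow_zero, pow_zero, mul_one, one_mul,
        add_left_inj, add_left_inj]
      refine sum_congr rfl fun i hi => ?_
      rw [show m + 2 - 1 - (i + 1) = m - 1 - i + 1 by have := mem_range.mp hi; omega]
      ring
    rw [hsum, show (X 0 * X 1) ^ a * (X 0 * X 1 * ∑ i ∈ range m, X 0 ^ i * X 1 ^ (m - 1 - i) +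
        X 0 ^ (m + 1) + X 1 ^ (m + 1)) =
        (X 0 * X 1) ^ (a + 1) * ∑ i ∈ range m, X 0 ^ i * X 1 ^ (m - 1 - i) +
          X 0 ^ (a + m + 1) * X 1 ^ a +
          (X 0 ^ a * X 1 ^ (a + m + 1) : MvPolynomial (Fin 2) (ZMod 2)) by ring,
      zOfPoly_add, zOfPoly_add, ih, one_mul, zOfPoly_X_pow_mul_X_pow, zOfPoly_X_pow_mul_X_pow,
      zz, zz, ← pc_inv, inv_mul_cancel]

theorem zOfPoly_X_pow_mul_geom_sum₂_mem_Lsub (a : ℕ) :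
    zOfPoly hz2 (X 0 ^ a * ∑ i ∈ range (2 ^ k - 1), X 0 ^ i * X 1 ^ (2 ^ k - 1 - 1 - i)) ∈
      Lsub x y k := by
  rcases le_or_gt (2 ^ k - 1) a with ha | ha
  · exact zOfPoly_X_pow_mul_mem_Lsub hz2 k ha _
  · obtain ⟨m, hm⟩ : ∃ m, 2 ^ k - 1 = m + a := ⟨2 ^ k - 1 - a, by omega⟩
    rw [hm, geom_sum₂_add, mul_add, zOfPoly_add]
    refine mul_mem ?_ ?_
    · rw [← mul_assoc, ← mul_pow, zOfPoly_X_mul_X_pow_mul_geom_sum₂]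
      exact one_mem _
    · rw [← mul_assoc, ← pow_add]
      exact zOfPoly_X_pow_mul_mem_Lsub hz2 k (by omega) _

variable (hca : ∀ z ∈ Zsub x y, ∀ h ∈ Hsub x y, z * h = h * z)
include hca

theorem zOfPoly_w_mem_Lsub (a b : ℕ) :
    zOfPoly hz2 (X 0 ^ (a + 1) * X 1 ^ b * ∑ t ∈ range (2 ^ k - 1),
      (X 0 * X 1) ^ t * (X 0 + X 1 + X 0 * X 1) ^ (2 ^ k - 1 - 1 - t)) ∈
      Lsub x y k := by
  rw [← ww_eq_zOfPoly hz2 hca]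
  exact Subgroup.subset_normalClosure (Or.inl ⟨_, _, by omega, by omega, rfl⟩)

theorem zOfPoly_w_swap_mem_Lsub (a b : ℕ) :
    zOfPoly hz2 (X 0 ^ a * X 1 ^ (b + 1) * ∑ t ∈ range (2 ^ k - 1),
      (X 0 * X 1) ^ t * (X 0 + X 1 + X 0 * X 1) ^ (2 ^ k - 1 - 1 - t)) ∈
      Lsub x y k := by
  rw [← zOfPoly_rename_swap]
  simp only [map_mul, map_pow, map_sum, map_add, rename_X, Equiv.swap_apply_left,
    Equiv.swap_apply_right]
  rw [mul_comm (X 1) (X 0), add_comm (X 1) (X 0), mul_comm (X 1 ^ a)]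
  exact zOfPoly_w_mem_Lsub hz2 k hca b a

end Membership

theorem zeta_mem_Lk_general (x y : G)
    (hca : ∀ z ∈ Zsub x y, ∀ h ∈ Hsub x y, z * h = h * z)
    (hz2 : ∀ z ∈ Zsub x y, z ^ 2 = 1)
    (k : ℕ) (i j : ℕ) (hi : 1 ≤ i) (hj : 1 ≤ j) :
    zeta x k (cc x y i) (cc x y j) ∈ Lsub x y k := by
  obtain ⟨i, rfl⟩ := Nat.exists_eq_add_of_le' hi
  obtain ⟨j, rfl⟩ := Nat.exists_eq_add_of_le' hj
  rw [zeta_eq_zOfPoly hz2 hca]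
  set N := 2 ^ k - 1
  set s : MvPolynomial (Fin 2) (ZMod 2) := X 0 + X 1 + X 0 * X 1
  set A := ∑ t ∈ range N, (X 0 * X 1) ^ t * s ^ (N - 1 - t)
  rcases j with _ | j
  · have hX01 : (X 0 + X 1 : MvPolynomial (Fin 2) (ZMod 2)) ≠ 0 :=
      fun h => zero_ne_one (X_injective (CharTwo.add_eq_zero.mp h))
    have key : X 0 ^ i * X 1 ^ 0 * ((1 + X 0) * ∑ l ∈ range N, X 0 ^ l * s ^ (N - 1 - l)) =
        X 0 ^ (i + 1) * X 1 ^ 0 * A + X 0 ^ i * ∑ l ∈ range N, X 0 ^ l * X 1 ^ (N - 1 - l) := by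
      rw [one_add_mul_geom_sum₂_of_add_one_eq_two_pow (X_ne_zero 1) hX01
        (Nat.sub_add_cancel Nat.one_le_two_pow)]
      ring
    rw [key, zOfPoly_add]
    exact mul_mem (zOfPoly_w_mem_Lsub hz2 k hca i 0)
      (zOfPoly_X_pow_mul_geom_sum₂_mem_Lsub hz2 k i)
  · have key :
        X 0 ^ i * X 1 ^ (j + 1) * ((1 + X 0) * ∑ l ∈ range N, X 0 ^ l * s ^ (N - 1 - l)) =
        X 0 ^ (i + 1) * X 1 ^ j * A + X 0 ^ i * X 1 ^ (j + 1) * A +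
          X 0 ^ N * (X 0 ^ i * X 1 ^ j + X 0 ^ i * X 1 ^ (j + N)) := by
      linear_combination X 0 ^ i * X 1 ^ j *
        mul_one_add_mul_geom_sum₂ (X 0 : MvPolynomial (Fin 2) (ZMod 2)) (X 1) N
    rw [key, zOfPoly_add, zOfPoly_add]
    exact mul_mem (mul_mem (zOfPoly_w_mem_Lsub hz2 k hca i j)
      (zOfPoly_w_swap_mem_Lsub hz2 k hca i j)) (zOfPoly_X_pow_mul_mem_Lsub hz2 k le_rfl _)

theorem zeta_mem_Lk (x y : G)
    (hca : ∀ z ∈ Zsub x y, ∀ h ∈ Hsub x y, z * h = h * z)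
    (hz2 : ∀ z ∈ Zsub x y, z ^ 2 = 1)
    (k : ℕ) (hk : 1 ≤ k) (i j : ℕ) (hi : 1 ≤ i) (hj : 1 ≤ j) :
    zeta x k (cc x y i) (cc x y j) ∈ Lsub x y k :=
  zeta_mem_Lk_general x y hca hz2 k i j hi hj

end Paper
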